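/- arXiv:1909.02987 — 2 statements merged into one kernel-verified Lean document; each statement's English description precedes it below -/
import Mathlib

section
/- If {P_j g_{jk} : k ∈ K} is a frame for P_j(H) with uniform frame bounds α, β for each j, and {P_j g_{jk} : j ∈ J, k ∈ K} is a frame for H with frame bounds αA and βB, then {P_j}_{j∈J} is a fusion frame with bounds (α/β)A and (β/α)B. -/
/-!
Since `P_j` is an orthogonal projection, `⟪f, P_j g_{jk}⟫ = ⟪P_j f, P_j g_{jk}⟫`, so the local
frame bounds applied to `P_j f` sandwich the `j`-th block of the global frame sum between
`α ‖P_j f‖²` and `β ‖P_j f‖²`. Summing over `j`,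
`α ∑ ‖P_j f‖² ≤ ∑_{j,k} ⟪f, P_j g_{jk}⟫² ≤ β ∑ ‖P_j f‖²`, and comparing with the global bounds
`α A ‖f‖²` and `β B ‖f‖²` gives the fusion frame bounds.
-/

open scoped RealInnerProductSpace

theorem inner_apply_eq_inner_apply_apply {𝕜 E : Type*} [RCLike 𝕜] [NormedAddCommGroup E]
    [InnerProductSpace 𝕜 E] [CompleteSpace E] {P : E →L[𝕜] E} (hsa : IsSelfAdjoint P)
    (hidem : IsIdempotentElem P) (f x : E) :
    inner 𝕜 f (P x) = inner 𝕜 (P f) (P x) :=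
  calc inner 𝕜 f (P x) = inner 𝕜 f ((P * P) x) := by rw [hidem.eq]
    _ = inner 𝕜 (P f) (P x) := (hsa.isSymmetric.apply_clm f (P x)).symm

theorem summable_inner_sq_of_mul_norm_sq_le_tsum {E K : Type*} [NormedAddCommGroup E]
    [InnerProductSpace ℝ E] {v : K → E} {f : E} {α : ℝ} (hα : 0 < α)
    (h : α * ‖f‖ ^ 2 ≤ ∑' k, ⟪f, v k⟫ ^ 2) : Summable fun k ↦ ⟪f, v k⟫ ^ 2 := by
  by_contra hs
  rw [tsum_eq_zero_of_not_summable hs] at h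
  have hf : f = 0 := by
    by_contra hf
    have : 0 < α * ‖f‖ ^ 2 := by positivity
    linarith
  simp [hf, summable_zero] at hs

/-- No summability of `f` is needed: if the double series diverges, so does the iterated one,
and both `tsum`s are the junk value `0`. -/
theorem tsum_prod_eq_tsum_tsum_of_nonneg {α β : Type*} {f : α × β → ℝ} (hf : 0 ≤ f)
    (hinner : ∀ x, Summable fun y ↦ f (x, y)) : ∑' p, f p = ∑' x, ∑' y, f (x, y) := by
  by_cases hs : Summable f
  · exact hs.tsum_prod
  · have houter : ¬Summable fun x ↦ ∑' y, f (x, y) := fun h ↦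
      hs ((summable_prod_of_nonneg hf).2 ⟨hinner, h⟩)
    rw [tsum_eq_zero_of_not_summable hs, tsum_eq_zero_of_not_summable houter]

theorem mul_tsum_le_tsum_and_tsum_le_mul_tsum {ι : Type*} {a s : ι → ℝ} {α β : ℝ}
    (hα : 0 < α) (ha : 0 ≤ a) (hlo : ∀ i, α * a i ≤ s i) (hhi : ∀ i, s i ≤ β * a i) :
    α * ∑' i, a i ≤ ∑' i, s i ∧ ∑' i, s i ≤ β * ∑' i, a i := by
  have hαa : ∀ i, 0 ≤ α * a i := fun i ↦ mul_nonneg hα.le (ha i)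
  have hs : 0 ≤ s := fun i ↦ (hαa i).trans (hlo i)
  rw [← tsum_mul_left, ← tsum_mul_left]
  by_cases hsum : Summable a
  · have hssum : Summable s := (hsum.mul_left β).of_nonneg_of_le hs hhi
    exact ⟨(hsum.mul_left α).tsum_le_tsum hlo hssum, hssum.tsum_le_tsum hhi (hsum.mul_left β)⟩
  · have hαsum : ¬Summable fun i ↦ α * a i := by rwa [summable_mul_left_iff hα.ne']
    have hssum : ¬Summable s := fun h ↦ hαsum (h.of_nonneg_of_le hαa hlo)
    rw [tsum_eq_zero_of_not_summable hαsum, tsum_eq_zero_of_not_summable hssum]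
    exact ⟨le_rfl, tsum_nonneg fun i ↦ (hs i).trans (hhi i)⟩

theorem stmt3_general {H : Type*} [NormedAddCommGroup H] [InnerProductSpace ℝ H] [CompleteSpace H]
    {J K : Type*}
    (P : J → H →L[ℝ] H) (hsa : ∀ j, IsSelfAdjoint (P j)) (hidem : ∀ j, IsIdempotentElem (P j))
    (g : J → K → H) (A B α β : ℝ) (hα : 0 < α) (hβ : 0 < β)
    (hlocal : ∀ j, ∀ f ∈ Set.range (P j),
      α * ‖f‖ ^ 2 ≤ ∑' k, ⟪f, P j (g j k)⟫ ^ 2 ∧ ∑' k, ⟪f, P j (g j k)⟫ ^ 2 ≤ β * ‖f‖ ^ 2)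
    (hglobal : ∀ f : H,
      α * A * ‖f‖ ^ 2 ≤ ∑' p : J × K, ⟪f, P p.1 (g p.1 p.2)⟫ ^ 2 ∧
      ∑' p : J × K, ⟪f, P p.1 (g p.1 p.2)⟫ ^ 2 ≤ β * B * ‖f‖ ^ 2) :
    ∀ f : H,
      (α / β) * A * ‖f‖ ^ 2 ≤ ∑' j, ‖P j f‖ ^ 2 ∧
      ∑' j, ‖P j f‖ ^ 2 ≤ (β / α) * B * ‖f‖ ^ 2 := by
  intro f
  have hblock : ∀ j, α * ‖P j f‖ ^ 2 ≤ ∑' k, ⟪P j f, P j (g j k)⟫ ^ 2 ∧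
      ∑' k, ⟪P j f, P j (g j k)⟫ ^ 2 ≤ β * ‖P j f‖ ^ 2 :=
    fun j ↦ hlocal j (P j f) ⟨f, rfl⟩
  have hsummable : ∀ j, Summable fun k ↦ ⟪P j f, P j (g j k)⟫ ^ 2 :=
    fun j ↦ summable_inner_sq_of_mul_norm_sq_le_tsum hα (hblock j).1
  simp only [← inner_apply_eq_inner_apply_apply (hsa _) (hidem _) f] at hblock hsummable
  have hsplit : ∑' p : J × K, ⟪f, P p.1 (g p.1 p.2)⟫ ^ 2 = ∑' j, ∑' k, ⟪f, P j (g j k)⟫ ^ 2 :=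
    tsum_prod_eq_tsum_tsum_of_nonneg (fun _ ↦ sq_nonneg _) hsummable
  obtain ⟨hlo, hhi⟩ := mul_tsum_le_tsum_and_tsum_le_mul_tsum hα (fun j ↦ sq_nonneg (‖P j f‖))
    (fun j ↦ (hblock j).1) (fun j ↦ (hblock j).2)
  obtain ⟨hg1, hg2⟩ := hglobal f
  rw [hsplit] at hg1 hg2
  rw [div_mul_eq_mul_div, div_mul_eq_mul_div, div_mul_eq_mul_div, div_mul_eq_mul_div,
    div_le_iff₀ hβ, le_div_iff₀ hα]
  constructor <;> linarith

theorem stmt3 {H : Type*} [NormedAddCommGroup H] [InnerProductSpace ℝ H] [CompleteSpace H]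
    {J K : Type*} [Countable J] [Countable K]
    (P : J → H →L[ℝ] H) (hsa : ∀ j, IsSelfAdjoint (P j)) (hidem : ∀ j, IsIdempotentElem (P j))
    (g : J → K → H) (A B α β : ℝ) (hA : 0 < A) (hB : 0 < B) (hα : 0 < α) (hβ : 0 < β)
    (hlocal : ∀ j, ∀ f ∈ Set.range (P j),
      α * ‖f‖ ^ 2 ≤ ∑' k, ⟪f, P j (g j k)⟫ ^ 2 ∧ ∑' k, ⟪f, P j (g j k)⟫ ^ 2 ≤ β * ‖f‖ ^ 2)
    (hglobal : ∀ f : H,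
      α * A * ‖f‖ ^ 2 ≤ ∑' p : J × K, ⟪f, P p.1 (g p.1 p.2)⟫ ^ 2 ∧
      ∑' p : J × K, ⟪f, P p.1 (g p.1 p.2)⟫ ^ 2 ≤ β * B * ‖f‖ ^ 2) :
    ∀ f : H,
      (α / β) * A * ‖f‖ ^ 2 ≤ ∑' j, ‖P j f‖ ^ 2 ∧
      ∑' j, ‖P j f‖ ^ 2 ≤ (β / α) * B * ‖f‖ ^ 2 :=
  stmt3_general P hsa hidem g A B α β hα hβ hlocal hglobal
end

section
/- Assume {P_j}_{j∈ℕ} are commuting orthogonal projections with P_j P_k = 0 for |j−k| ≥ M, the family is complete, each {P_j g_{jk} : k ∈ K} is a frame for P_j(H) with uniform bounds α, β, and P_j g_{jk} = g_{jk} for all j, k. Then {g_{jk} : j ∈ J, k ∈ K} is a frame for H. -/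
/-!
Splitting ℕ into residue classes mod `M`, the `P j` within one class are mutually orthogonal, so
`∑ j, ‖P j f‖ ^ 2 ≤ M * ‖f‖ ^ 2`. For the reverse inequality, the products
`S n = prodOneSub P n = (1 - P (n - 1)) ⋯ (1 - P 0)` form a decreasing sequence of projections (onto
`⋂ j < n, ker (P j)`), hence converge strongly, and completeness of the family forces the limit
to be `0`; telescoping `‖S j f‖ ^ 2 - ‖S (j + 1) f‖ ^ 2 = ‖P j (S j f)‖ ^ 2 ≤ ‖P j f‖ ^ 2` then
gives `‖f‖ ^ 2 ≤ ∑ j, ‖P j f‖ ^ 2`. As `⟪f, g j k⟫ = ⟪P j f, P j (g j k)⟫`, the local frame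
bounds at `P j f` add up to global frame bounds `α` and `β * M`.
-/

open Filter Topology RCLike
open scoped RealInnerProductSpace

section Algebra

variable {R : Type*}

theorem isStarProjection_sum_of_mul_eq_zero [NonUnitalNonAssocSemiring R] [StarRing R]
    {ι : Type*} {p : ι → R} (s : Finset ι) (hp : ∀ i ∈ s, IsStarProjection (p i))
    (horth : ∀ i ∈ s, ∀ j ∈ s, i ≠ j → p i * p j = 0) :
    IsStarProjection (∑ i ∈ s, p i) := by
  classical
  induction s using Finset.induction_on with
  | empty => simp [IsStarProjection.zero]
  | insert a s ha ih =>
    rw [Finset.sum_insert ha]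
    refine (hp a (s.mem_insert_self a)).add
      (ih (fun i hi => hp i (Finset.mem_insert_of_mem hi))
        (fun i hi j hj => horth i (Finset.mem_insert_of_mem hi) j (Finset.mem_insert_of_mem hj)))
      ?_
    rw [Finset.mul_sum]
    refine Finset.sum_eq_zero fun i hi => horth a (s.mem_insert_self a) i
      (Finset.mem_insert_of_mem hi) (ne_of_mem_of_not_mem hi ha).symm

variable [Ring R] (P : ℕ → R)

def prodOneSub : ℕ → R
  | 0 => 1
  | n + 1 => (1 - P n) * prodOneSub n

variable {P}

theorem commute_prodOneSub (hcomm : ∀ j k, Commute (P j) (P k)) (j n : ℕ) :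
    Commute (P j) (prodOneSub P n) := by
  induction n with
  | zero => exact Commute.one_right _
  | succ n ih => exact ((Commute.one_right _).sub_right (hcomm j n)).mul_right ih

theorem mul_prodOneSub_eq_zero (hidem : ∀ j, IsIdempotentElem (P j))
    (hcomm : ∀ j k, Commute (P j) (P k)) {j n : ℕ} (h : j < n) :
    P j * prodOneSub P n = 0 := by
  induction n with
  | zero => omega
  | succ n ih =>
    rw [prodOneSub, ← mul_assoc]
    rcases Nat.lt_succ_iff_lt_or_eq.mp h with h | rfl
    · rw [((Commute.one_right _).sub_right (hcomm j n)).eq, mul_assoc, ih h, mul_zero]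
    · rw [(hidem j).mul_one_sub_self, zero_mul]

theorem isIdempotentElem_prodOneSub (hidem : ∀ j, IsIdempotentElem (P j))
    (hcomm : ∀ j k, Commute (P j) (P k)) (n : ℕ) : IsIdempotentElem (prodOneSub P n) := by
  induction n with
  | zero => exact .one
  | succ n ih =>
    exact (hidem n).one_sub.mul_of_commute
      ((Commute.one_left _).sub_left (commute_prodOneSub hcomm n n)) ih

theorem prodOneSub_mul_prodOneSub (hidem : ∀ j, IsIdempotentElem (P j))
    (hcomm : ∀ j k, Commute (P j) (P k)) {n m : ℕ} (h : n ≤ m) :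
    prodOneSub P n * prodOneSub P m = prodOneSub P m := by
  induction m with
  | zero => rw [Nat.le_zero.mp h, prodOneSub, one_mul]
  | succ m ih =>
    rcases Nat.le_succ_iff.mp h with h | rfl
    · rw [prodOneSub, ← mul_assoc,
        ((Commute.one_left _).sub_left (commute_prodOneSub hcomm m n)).symm.eq, mul_assoc, ih h]
    · exact isIdempotentElem_prodOneSub hidem hcomm _

theorem isStarProjection_prodOneSub [StarRing R] (hP : ∀ j, IsStarProjection (P j))
    (hcomm : ∀ j k, Commute (P j) (P k)) (n : ℕ) : IsStarProjection (prodOneSub P n) := by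
  induction n with
  | zero => exact .one _
  | succ n ih =>
    exact (hP n).one_sub.mul ih ((Commute.one_left _).sub_left (commute_prodOneSub hcomm n n))

end Algebra

section Projections

variable {𝕜 E : Type*} [RCLike 𝕜] [NormedAddCommGroup E] [InnerProductSpace 𝕜 E] [CompleteSpace E]
  {p q : E →L[𝕜] E}

theorem IsStarProjection.norm_sq_apply (hp : IsStarProjection p) (x : E) :
    ‖p x‖ ^ 2 = re (inner 𝕜 x (p x)) := by
  have h := hp.isSelfAdjoint.isSymmetric x (p x)
  rw [ContinuousLinearMap.coe_coe] at h
  rw [← inner_self_eq_norm_sq (𝕜 := 𝕜), h, ← mul_apply_eq_comp,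
    hp.isIdempotentElem.eq]

theorem IsStarProjection.norm_apply_le (hp : IsStarProjection p) (x : E) : ‖p x‖ ≤ ‖x‖ :=
  (p.le_opNorm x).trans (mul_le_of_le_one_left (norm_nonneg x) (hp.norm_le p))

theorem IsStarProjection.norm_sq_sub_apply (hp : IsStarProjection p) (hq : IsStarProjection q)
    (hqp : q * p = p) (x : E) : ‖(q - p) x‖ ^ 2 = ‖q x‖ ^ 2 - ‖p x‖ ^ 2 := by
  rw [(hp.sub_of_mul_eq_right hq hqp).norm_sq_apply, hq.norm_sq_apply, hp.norm_sq_apply,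
    sub_apply, inner_sub_right, map_sub]

theorem sum_norm_sq_apply_le_of_mul_eq_zero {ι : Type*} {P : ι → E →L[𝕜] E} (s : Finset ι)
    (hP : ∀ i ∈ s, IsStarProjection (P i)) (horth : ∀ i ∈ s, ∀ j ∈ s, i ≠ j → P i * P j = 0)
    (x : E) : ∑ i ∈ s, ‖P i x‖ ^ 2 ≤ ‖x‖ ^ 2 := by
  have hsum := isStarProjection_sum_of_mul_eq_zero s hP horth
  calc ∑ i ∈ s, ‖P i x‖ ^ 2 = ‖(∑ i ∈ s, P i) x‖ ^ 2 := by
        rw [hsum.norm_sq_apply, sum_apply, inner_sum, map_sum]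
        exact Finset.sum_congr rfl fun i hi => (hP i hi).norm_sq_apply x
    _ ≤ ‖x‖ ^ 2 := by gcongr; exact hsum.norm_apply_le x

theorem sum_norm_sq_apply_le_of_banded {P : ℕ → E →L[𝕜] E} (hP : ∀ j, IsStarProjection (P j))
    {M : ℕ} (hM : 0 < M) (hband : ∀ j k : ℕ, (M : ℤ) ≤ |(j : ℤ) - (k : ℤ)| → P j * P k = 0)
    (s : Finset ℕ) (x : E) : ∑ j ∈ s, ‖P j x‖ ^ 2 ≤ M * ‖x‖ ^ 2 := by
  have hmod : ∀ j ∈ s, j % M ∈ Finset.range M := fun j _ => Finset.mem_range.mpr (Nat.mod_lt _ hM)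
  rw [← Finset.sum_fiberwise_of_maps_to hmod]
  calc ∑ r ∈ Finset.range M, ∑ j ∈ s with j % M = r, ‖P j x‖ ^ 2
      ≤ ∑ _r ∈ Finset.range M, ‖x‖ ^ 2 := by
        refine Finset.sum_le_sum fun r _ => sum_norm_sq_apply_le_of_mul_eq_zero _
          (fun j _ => hP j) (fun j hj k hk hjk => hband j k ?_) x
        simp only [Finset.mem_filter] at hj hk
        have hdvd : (M : ℤ) ∣ (j : ℤ) - k := Int.ModEq.dvd (by exact_mod_cast hk.2.trans hj.2.symm)
        exact Int.le_of_dvd (abs_pos.mpr (sub_ne_zero.mpr (by exact_mod_cast hjk)))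
          ((dvd_abs _ _).mpr hdvd)
    _ = M * ‖x‖ ^ 2 := by rw [Finset.sum_const, Finset.card_range, nsmul_eq_mul]

theorem summable_norm_sq_apply_of_banded {P : ℕ → E →L[𝕜] E} (hP : ∀ j, IsStarProjection (P j))
    {M : ℕ} (hM : 0 < M) (hband : ∀ j k : ℕ, (M : ℤ) ≤ |(j : ℤ) - (k : ℤ)| → P j * P k = 0)
    (x : E) : Summable fun j => ‖P j x‖ ^ 2 :=
  summable_of_sum_le (fun _ => sq_nonneg _) (sum_norm_sq_apply_le_of_banded hP hM hband · x)

theorem tsum_norm_sq_apply_le_of_banded {P : ℕ → E →L[𝕜] E} (hP : ∀ j, IsStarProjection (P j))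
    {M : ℕ} (hM : 0 < M) (hband : ∀ j k : ℕ, (M : ℤ) ≤ |(j : ℤ) - (k : ℤ)| → P j * P k = 0)
    (x : E) : ∑' j, ‖P j x‖ ^ 2 ≤ M * ‖x‖ ^ 2 :=
  (summable_norm_sq_apply_of_banded hP hM hband x).tsum_le_of_sum_le
    (sum_norm_sq_apply_le_of_banded hP hM hband · x)

theorem cauchySeq_apply_of_isStarProjection {S : ℕ → E →L[𝕜] E}
    (hS : ∀ n, IsStarProjection (S n)) (hdec : ∀ n m, n ≤ m → S n * S m = S m) (x : E) :
    CauchySeq fun n => S n x := by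
  set a : ℕ → ℝ := fun n => ‖S n x‖ ^ 2
  have hdist : ∀ n m, n ≤ m → ‖S n x - S m x‖ ^ 2 = a n - a m := fun n m h =>
    (hS m).norm_sq_sub_apply (hS n) (hdec n m h) x
  have ha : Antitone a := fun n m h => sub_nonneg.mp ((hdist n m h).symm ▸ sq_nonneg _)
  have hbdd : BddBelow (Set.range a) := ⟨0, by rintro _ ⟨n, rfl⟩; positivity⟩
  refine cauchySeq_of_le_tendsto_0' (fun n => √(a n - ⨅ m, a m)) (fun n m h => ?_) ?_
  · rw [dist_eq_norm, Real.le_sqrt (norm_nonneg _) (sub_nonneg.mpr (ciInf_le hbdd n)), hdist n m h]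
    linarith [ciInf_le hbdd m]
  · simpa using ((tendsto_atTop_ciInf ha hbdd).sub_const (⨅ m, a m)).sqrt

section Complete

variable {P : ℕ → E →L[𝕜] E} (hP : ∀ j, IsStarProjection (P j))
  (hcomm : ∀ j k, Commute (P j) (P k))
include hP hcomm

theorem tendsto_prodOneSub_apply_zero (hcomplete : ∀ x, (∀ j, P j x = 0) → x = 0) (x : E) :
    Tendsto (fun n => prodOneSub P n x) atTop (𝓝 0) := by
  have hidem j := (hP j).isIdempotentElem
  obtain ⟨y, hy⟩ := cauchySeq_tendsto_of_complete <|
    cauchySeq_apply_of_isStarProjection (isStarProjection_prodOneSub hP hcomm)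
      (fun _ _ => prodOneSub_mul_prodOneSub hidem hcomm) x
  suffices y = 0 from this ▸ hy
  refine hcomplete y fun j => tendsto_nhds_unique (((P j).continuous.tendsto y).comp hy) ?_
  refine tendsto_const_nhds.congr' ?_
  filter_upwards [eventually_gt_atTop j] with n hn
  rw [Function.comp_apply, ← mul_apply_eq_comp, mul_prodOneSub_eq_zero hidem hcomm hn,
    zero_apply]

theorem norm_sq_sub_norm_sq_prodOneSub_apply_le (x : E) (n : ℕ) :
    ‖x‖ ^ 2 - ‖prodOneSub P n x‖ ^ 2 ≤ ∑ j ∈ Finset.range n, ‖P j x‖ ^ 2 := by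
  have hS := isStarProjection_prodOneSub hP hcomm
  change ‖prodOneSub P 0 x‖ ^ 2 - _ ≤ _
  rw [← Finset.sum_range_sub' (fun j => ‖prodOneSub P j x‖ ^ 2)]
  refine Finset.sum_le_sum fun j _ => ?_
  have hstep : prodOneSub P j - prodOneSub P (j + 1) = P j * prodOneSub P j := by
    rw [prodOneSub, sub_mul, one_mul, sub_sub_cancel]
  rw [← (hS (j + 1)).norm_sq_sub_apply (hS j) (prodOneSub_mul_prodOneSub
      (fun j => (hP j).isIdempotentElem) hcomm j.le_succ), hstep, (commute_prodOneSub hcomm j j).eq,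
    mul_apply_eq_comp]
  gcongr
  exact (hS j).norm_apply_le _

theorem norm_sq_le_tsum_norm_sq_apply (hcomplete : ∀ x, (∀ j, P j x = 0) → x = 0) {x : E}
    (hsum : Summable fun j => ‖P j x‖ ^ 2) : ‖x‖ ^ 2 ≤ ∑' j, ‖P j x‖ ^ 2 := by
  have hlim : Tendsto (fun n => ‖x‖ ^ 2 - ‖prodOneSub P n x‖ ^ 2) atTop (𝓝 (‖x‖ ^ 2)) := by
    simpa using
      ((tendsto_prodOneSub_apply_zero hP hcomm hcomplete x).norm.pow 2).const_sub (‖x‖ ^ 2)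
  exact le_of_tendsto' hlim fun n => (norm_sq_sub_norm_sq_prodOneSub_apply_le hP hcomm x n).trans
    (hsum.sum_le_tsum _ fun j _ => sq_nonneg _)

end Complete

end Projections

theorem mul_tsum_le_tsum_prod_and_tsum_prod_le_mul {ι K : Type*} {c : ι → K → ℝ} {a : ι → ℝ}
    {α β : ℝ} (hc : ∀ j k, 0 ≤ c j k) (hslice : ∀ j, Summable (c j)) (ha : Summable a)
    (hlower : ∀ j, α * a j ≤ ∑' k, c j k) (hupper : ∀ j, ∑' k, c j k ≤ β * a j) :
    α * ∑' j, a j ≤ ∑' p : ι × K, c p.1 p.2 ∧ ∑' p : ι × K, c p.1 p.2 ≤ β * ∑' j, a j := by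
  have houter : Summable fun j => ∑' k, c j k :=
    (ha.mul_left β).of_nonneg_of_le (fun j => tsum_nonneg (hc j)) hupper
  have hprod : ∑' p : ι × K, c p.1 p.2 = ∑' j, ∑' k, c j k :=
    ((summable_prod_of_nonneg fun p => hc p.1 p.2).mpr ⟨hslice, houter⟩).tsum_prod' hslice
  rw [hprod, ← tsum_mul_left, ← tsum_mul_left]
  exact ⟨(ha.mul_left α).tsum_le_tsum hlower houter, houter.tsum_le_tsum hupper (ha.mul_left β)⟩

theorem stmt8_general {H : Type*} [NormedAddCommGroup H] [InnerProductSpace ℝ H] [CompleteSpace H]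
    {K : Type*}
    (P : ℕ → H →L[ℝ] H) (hsa : ∀ j, IsSelfAdjoint (P j)) (hidem : ∀ j, IsIdempotentElem (P j))
    (hcomm : ∀ j k, (P j) ∘L (P k) = (P k) ∘L (P j))
    (M : ℕ) (hM : 0 < M)
    (horth : ∀ j k : ℕ, (M : ℤ) ≤ |(j : ℤ) - (k : ℤ)| → (P j) ∘L (P k) = 0)
    (hcomplete : ∀ f : H, (∀ j, P j f = 0) → f = 0)
    (g : ℕ → K → H) (α β : ℝ) (hα : 0 < α) (hβ : 0 < β)
    (hlocal : ∀ j, ∀ f ∈ Set.range (P j),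
      α * ‖f‖ ^ 2 ≤ ∑' k, ⟪f, P j (g j k)⟫ ^ 2 ∧ ∑' k, ⟪f, P j (g j k)⟫ ^ 2 ≤ β * ‖f‖ ^ 2)
    (hfix : ∀ j k, P j (g j k) = g j k) :
    ∃ C D : ℝ, 0 < C ∧ 0 < D ∧ ∀ f : H,
      C * ‖f‖ ^ 2 ≤ ∑' p : ℕ × K, ⟪f, g p.1 p.2⟫ ^ 2 ∧
      ∑' p : ℕ × K, ⟪f, g p.1 p.2⟫ ^ 2 ≤ D * ‖f‖ ^ 2 := by
  have hP j : IsStarProjection (P j) := ⟨hidem j, hsa j⟩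
  refine ⟨α, β * M, hα, by positivity, fun f => ?_⟩
  have hcoef j k : ⟪P j f, P j (g j k)⟫ = ⟪f, g j k⟫ := by
    rw [hfix, ← ContinuousLinearMap.adjoint_inner_right, (hsa j).adjoint_eq, hfix]
  have hframe j := hlocal j (P j f) ⟨f, rfl⟩
  simp only [hcoef] at hframe
  have hslice j : Summable fun k => ⟪f, g j k⟫ ^ 2 := by
    by_cases hPf : P j f = 0
    · simp [← hcoef j, hPf]
    by_contra hns
    have h := (hframe j).1
    rw [tsum_eq_zero_of_not_summable hns] at h
    exact (mul_pos hα (pow_pos (norm_pos_iff.mpr hPf) 2)).not_ge h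
  have hsum := summable_norm_sq_apply_of_banded hP hM horth f
  obtain ⟨hlower, hupper⟩ := mul_tsum_le_tsum_prod_and_tsum_prod_le_mul
    (fun j k => sq_nonneg ⟪f, g j k⟫) hslice hsum (fun j => (hframe j).1) (fun j => (hframe j).2)
  refine ⟨?_, hupper.trans ?_⟩
  · exact (mul_le_mul_of_nonneg_left (norm_sq_le_tsum_norm_sq_apply hP hcomm hcomplete hsum)
      hα.le).trans hlower
  · rw [mul_assoc]
    exact mul_le_mul_of_nonneg_left (tsum_norm_sq_apply_le_of_banded hP hM horth f) hβ.le

theorem stmt8 {H : Type*} [NormedAddCommGroup H] [InnerProductSpace ℝ H] [CompleteSpace H]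
    {K : Type*} [Countable K]
    (P : ℕ → H →L[ℝ] H) (hsa : ∀ j, IsSelfAdjoint (P j)) (hidem : ∀ j, IsIdempotentElem (P j))
    (hcomm : ∀ j k, (P j) ∘L (P k) = (P k) ∘L (P j))
    (M : ℕ) (hM : 0 < M)
    (horth : ∀ j k : ℕ, (M : ℤ) ≤ |(j : ℤ) - (k : ℤ)| → (P j) ∘L (P k) = 0)
    (hcomplete : ∀ f : H, (∀ j, P j f = 0) → f = 0)
    (g : ℕ → K → H) (α β : ℝ) (hα : 0 < α) (hβ : 0 < β)
    (hlocal : ∀ j, ∀ f ∈ Set.range (P j),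
      α * ‖f‖ ^ 2 ≤ ∑' k, ⟪f, P j (g j k)⟫ ^ 2 ∧ ∑' k, ⟪f, P j (g j k)⟫ ^ 2 ≤ β * ‖f‖ ^ 2)
    (hfix : ∀ j k, P j (g j k) = g j k) :
    ∃ C D : ℝ, 0 < C ∧ 0 < D ∧ ∀ f : H,
      C * ‖f‖ ^ 2 ≤ ∑' p : ℕ × K, ⟪f, g p.1 p.2⟫ ^ 2 ∧
      ∑' p : ℕ × K, ⟪f, g p.1 p.2⟫ ^ 2 ≤ D * ‖f‖ ^ 2 :=
  stmt8_general P hsa hidem hcomm M hM horth hcomplete g α β hα hβ hlocal hfix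
end
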